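/- arXiv:1808.02920 — 3 statements merged into one kernel-verified Lean document; each statement's English description precedes it below -/
import Mathlib

section
/- Let G be a Lie 2-group with multiplication functor m: G × G → G and let u ∈ T_{e₀}G₀. Define the vector field q(u)₁ on G₁ by q(u)₁(γ) = T𝓛_γ(T1(u)), where 𝓛_γ is left multiplication by γ in the Lie group G₁ and 1: G₀ → G₁ is the unit map. Then q(u)₁ preserves composition of arrows: q(u)₁(γ₂ ∗ γ₁) = q(u)₁(γ₂) ⋆ q(u)₁(γ₁) for all composable (γ₂, γ₁), where ⋆ = T∗ is the composition in the tangent groupoid TG. -/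
/-- A strict 2-group: a category internal to the category of groups.
`A0` is the group of objects, `A1` the group of arrows; source, target and unit are
group homomorphisms, and the (total extension of the) composition `comp σ γ`
(meaning `σ ∗ γ`, defined when `s σ = t γ`) satisfies the usual category axioms and
the interchange law (which expresses that `∗ : G₂ → G₁` is a group homomorphism). -/
structure TwoGp (A0 A1 : Type*) [Group A0] [Group A1] where
  s : A1 →* A0
  t : A1 →* A0
  e : A0 →* A1
  s_e : ∀ x, s (e x) = x
  t_e : ∀ x, t (e x) = x
  comp : A1 → A1 → A1
  s_comp : ∀ {σ γ}, s σ = t γ → s (comp σ γ) = s γ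
  t_comp : ∀ {σ γ}, s σ = t γ → t (comp σ γ) = t σ
  comp_e_left : ∀ γ, comp (e (t γ)) γ = γ
  comp_e_right : ∀ σ, comp σ (e (s σ)) = σ
  assoc : ∀ {σ₃ σ₂ σ₁}, s σ₃ = t σ₂ → s σ₂ = t σ₁ →
    comp (comp σ₃ σ₂) σ₁ = comp σ₃ (comp σ₂ σ₁)
  interchange : ∀ {σ₂ σ₁ γ₂ γ₁ : A1}, s σ₂ = t σ₁ → s γ₂ = t γ₁ →
    comp σ₂ σ₁ * comp γ₂ γ₁ = comp (σ₂ * γ₂) (σ₁ * γ₁)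
/-- A homomorphism of strict 2-groups: a functor internal to the category of groups. -/
structure TwoGpHom {A0 A1 B0 B1 : Type*} [Group A0] [Group A1] [Group B0] [Group B1]
    (T : TwoGp A0 A1) (U : TwoGp B0 B1) where
  f0 : A0 →* B0
  f1 : A1 →* B1
  map_s : ∀ γ, U.s (f1 γ) = f0 (T.s γ)
  map_t : ∀ γ, U.t (f1 γ) = f0 (T.t γ)
  map_e : ∀ x, f1 (T.e x) = U.e (f0 x)
  map_comp : ∀ {σ γ}, T.s σ = T.t γ → f1 (T.comp σ γ) = U.comp (f1 σ) (f1 γ)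

/-- An (algebraic model of the) tangent 2-group `TG` of a Lie 2-group `G = T`:
`TT` models the tangent groupoid `TG` (which is again a 2-group, with multiplication
`Tm`, unit `T1` and composition `⋆ = T∗`), `ζ` models the zero section `G → TG`
(a homomorphism of 2-groups), and `π` models the projection `TG → G` (a homomorphism
of 2-groups with `π ∘ ζ = id`).  In this model, for `γ ∈ G₁` and `v ∈ TG₁`, the
derivative of left translation acts by `T𝓛_γ(v) = Tm(0_γ, v) = ζ₁(γ) * v`, and
similarly on `TG₀`; the unit map `T1 : TG₀ → TG₁` is `TT.e`. -/
structure TangentModel {G0 G1 TG0 TG1 : Type*}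
    [Group G0] [Group G1] [Group TG0] [Group TG1]
    (T : TwoGp G0 G1) (TT : TwoGp TG0 TG1) where
  ζ : TwoGpHom T TT
  π : TwoGpHom TT T
  π_ζ0 : ∀ x, π.f0 (ζ.f0 x) = x
  π_ζ1 : ∀ γ, π.f1 (ζ.f1 γ) = γ

namespace TwoGp

variable {A0 A1 : Type*} [Group A0] [Group A1] (T : TwoGp A0 A1)

theorem comp_e_self (x : A0) : T.comp (T.e x) (T.e x) = T.e x := by
  simpa only [T.t_e] using T.comp_e_left (T.e x)

-- Interchange with the idempotent unit arrow `e x = e x ∗ e x`.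
theorem comp_mul_e {σ γ : A1} (h : T.s σ = T.t γ) (x : A0) :
    T.comp σ γ * T.e x = T.comp (σ * T.e x) (γ * T.e x) := by
  have hx : T.s (T.e x) = T.t (T.e x) := by rw [T.s_e, T.t_e]
  rw [← T.interchange h hx, T.comp_e_self]

end TwoGp

theorem TwoGpHom.s_map_eq_t_map {A0 A1 B0 B1 : Type*} [Group A0] [Group A1] [Group B0] [Group B1]
    {T : TwoGp A0 A1} {U : TwoGp B0 B1} (F : TwoGpHom T U) {σ γ : A1} (h : T.s σ = T.t γ) :
    U.s (F.f1 σ) = U.t (F.f1 γ) := by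
  rw [F.map_s, F.map_t, h]

theorem q_preserves_composition_general {G0 G1 TG0 TG1 : Type*}
    [Group G0] [Group G1] [Group TG0] [Group TG1]
    (T : TwoGp G0 G1) (TT : TwoGp TG0 TG1) (M : TangentModel T TT)
    (u : TG0)
    (γ₂ γ₁ : G1) (h : T.s γ₂ = T.t γ₁) :
    -- `q(u)₁(γ) := T𝓛_γ(T1 u) = ζ₁(γ) · T1(u)`
    M.ζ.f1 (T.comp γ₂ γ₁) * TT.e u =
      TT.comp (M.ζ.f1 γ₂ * TT.e u) (M.ζ.f1 γ₁ * TT.e u) := by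
  rw [M.ζ.map_comp h, TT.comp_mul_e (M.ζ.s_map_eq_t_map h)]

theorem q_preserves_composition {G0 G1 TG0 TG1 : Type*}
    [Group G0] [Group G1] [Group TG0] [Group TG1]
    (T : TwoGp G0 G1) (TT : TwoGp TG0 TG1) (M : TangentModel T TT)
    (u : TG0) (hu : M.π.f0 u = 1)
    (γ₂ γ₁ : G1) (h : T.s γ₂ = T.t γ₁) :
    -- `q(u)₁(γ) := T𝓛_γ(T1 u) = ζ₁(γ) · T1(u)`
    M.ζ.f1 (T.comp γ₂ γ₁) * TT.e u =
      TT.comp (M.ζ.f1 γ₂ * TT.e u) (M.ζ.f1 γ₁ * TT.e u) :=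
  q_preserves_composition_general T TT M u γ₂ γ₁ h
end

section
/- Let G be a Lie 2-group, ℒ(G)₀ the Lie algebra of left-invariant vector fields on the Lie group G₀, and 𝕏(G)₀ the Lie algebra of multiplicative vector fields on the Lie groupoid G with bracket [(u₀,u₁),(v₀,v₁)] = ([u₀,v₀],[u₁,v₁]). Then the map q: ℒ(G)₀ → 𝕏(G)₀ defined by q(u) = (u, γ ↦ T𝓛_γ(T1(u(e₀)))) is an injective Lie algebra homomorphism. -/
/-!
STATEMENT 13: Let `G` be a Lie 2-group, `ℒ(G)₀` the Lie algebra of left-invariant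
vector fields on the Lie group `G₀`, and `𝕏(G)₀` the Lie algebra of multiplicative
vector fields on `G`, with bracket `[(u₀,u₁),(v₀,v₁)] = ([u₀,v₀],[u₁,v₁])`.  Then
`q : ℒ(G)₀ → 𝕏(G)₀`, `q(u) = (u, γ ↦ T𝓛_γ(T1(u(e₀))))`, is an injective Lie algebra
homomorphism.

We work in a global chart: the Lie groups `G₀` and `G₁` are modelled by real normed
spaces carrying (smooth) group structures, vector fields are maps `G → G` (with the
canonical identification `T_x G ≅ G`), `𝓛_γ` is left multiplication by `γ` in `G₁`,
and `1 : G₀ → G₁` is the unit homomorphism `E`.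
-/

/-- The Lie bracket of vector fields on a normed space (in a global chart). -/
noncomputable def lieB {V : Type*} [NormedAddCommGroup V] [NormedSpace ℝ V]
    (v w : V → V) : V → V :=
  fun x => fderiv ℝ w x (v x) - fderiv ℝ v x (w x)

/-- Left invariance of a vector field on a group modelled on a normed space:
`v(x·y) = T𝓛_x(v(y))`. -/
def LeftInv {V : Type*} [NormedAddCommGroup V] [NormedSpace ℝ V] [Group V]
    (v : V → V) : Prop :=
  ∀ x y : V, v (x * y) = fderiv ℝ (fun z => x * z) y (v y)

/-- If `X, Y` are `F`-related to `u, v`, then `[X,Y]` is `F`-related to `[u,v]` at `x`. -/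
theorem related_lieB {V W : Type*} [NormedAddCommGroup V] [NormedSpace ℝ V]
    [NormedAddCommGroup W] [NormedSpace ℝ W]
    (F : V → W) (hF : ContDiff ℝ (⊤ : ℕ∞) F)
    (u v : V → V) (X Y : W → W) (x : V)
    (hu : DifferentiableAt ℝ u x) (hv : DifferentiableAt ℝ v x)
    (hX : DifferentiableAt ℝ X (F x)) (hY : DifferentiableAt ℝ Y (F x))
    (hXF : ∀ z, X (F z) = fderiv ℝ F z (u z))
    (hYF : ∀ z, Y (F z) = fderiv ℝ F z (v z)) :
    lieB X Y (F x) = fderiv ℝ F x (lieB u v x) := by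
  have hF' : Differentiable ℝ F := hF.differentiable (by simp)
  have hdF : DifferentiableAt ℝ (fun z => fderiv ℝ F z) x :=
    ((hF.fderiv_right (m := (⊤ : ℕ∞)) (by simp)).differentiable (by simp)) x
  have key : ∀ (v : V → V) (Y : W → W), DifferentiableAt ℝ v x →
      DifferentiableAt ℝ Y (F x) → (∀ z, Y (F z) = fderiv ℝ F z (v z)) →
      ∀ w : V, fderiv ℝ Y (F x) (fderiv ℝ F x w)
        = fderiv ℝ F x (fderiv ℝ v x w) + fderiv ℝ (fderiv ℝ F) x w (v x) := by
    intro v Y hv hY hYF w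
    have h1 : fderiv ℝ (Y ∘ F) x = (fderiv ℝ Y (F x)).comp (fderiv ℝ F x) :=
      fderiv_comp x hY (hF' x)
    have h2 : (Y ∘ F) = fun z => fderiv ℝ F z (v z) := funext fun z => hYF z
    have h3 : fderiv ℝ (fun z => fderiv ℝ F z (v z)) x
        = (fderiv ℝ F x).comp (fderiv ℝ v x) + (fderiv ℝ (fderiv ℝ F) x).flip (v x) :=
      fderiv_clm_apply hdF hv
    have h4 := h1.symm.trans (by rw [h2, h3])
    have h5 := congrArg (fun L : V →L[ℝ] W => L w) h4
    simpa using h5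
  have hsym : fderiv ℝ (fderiv ℝ F) x (u x) (v x) = fderiv ℝ (fderiv ℝ F) x (v x) (u x) :=
    (hF.contDiffAt.isSymmSndFDerivAt (by simp [minSmoothness_of_isRCLikeNormedField]; exact WithTop.coe_le_coe.mpr (le_top : (2 : ℕ∞) ≤ ⊤))) (u x) (v x)
  have e1 := key v Y hv hY hYF (u x)
  have e2 := key u X hu hX hXF (v x)
  simp only [lieB, hXF x, hYF x, e1, e2, map_sub]
  rw [hsym]
  abel

section grp
variable {V : Type*} [NormedAddCommGroup V] [NormedSpace ℝ V] [Group V]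

theorem smooth_lmul (hm : ContDiff ℝ (⊤ : ℕ∞) fun p : V × V => p.1 * p.2) (x : V) :
    ContDiff ℝ (⊤ : ℕ∞) fun z : V => x * z :=
  hm.comp (contDiff_const.prodMk contDiff_id)

theorem smooth_Xa (hm : ContDiff ℝ (⊤ : ℕ∞) fun p : V × V => p.1 * p.2) (a : V) :
    ContDiff ℝ (⊤ : ℕ∞) fun γ : V => fderiv ℝ (fun μ => γ * μ) 1 a := by
  exact (ContDiff.fderiv (f := fun γ μ : V => γ * μ) (g := fun _ => (1 : V)) hm
    contDiff_const (by simp)).clm_apply contDiff_const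

theorem leftInv_Xa (hm : ContDiff ℝ (⊤ : ℕ∞) fun p : V × V => p.1 * p.2) (a : V) :
    LeftInv fun γ : V => fderiv ℝ (fun μ => γ * μ) 1 a := by
  intro x y
  show (fderiv ℝ (fun μ => x * y * μ) 1) a
      = fderiv ℝ (fun z => x * z) y ((fderiv ℝ (fun μ => y * μ) 1) a)
  have h1 : (fun μ => x * y * μ) = (fun z => x * z) ∘ fun μ => y * μ := by
    funext μ; simp [mul_assoc]
  have h2 : fderiv ℝ ((fun z => x * z) ∘ fun μ => y * μ) 1
      = (fderiv ℝ (fun z => x * z) y).comp (fderiv ℝ (fun μ => y * μ) 1) := by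
    have := fderiv_comp (1 : V) (g := fun z => x * z) (f := fun μ => y * μ)
      (((smooth_lmul hm x).differentiable (by simp)) _)
      (((smooth_lmul hm y).differentiable (by simp)) 1)
    simpa using this
  rw [h1, h2]; rfl

end grp

variable {G0 G1 : Type*}
  [NormedAddCommGroup G0] [NormedSpace ℝ G0] [Group G0]
  [NormedAddCommGroup G1] [NormedSpace ℝ G1] [Group G1]

/-- `q(u)₁ : γ ↦ T𝓛_γ(T1(u(e₀)))`, the arrow component of the multiplicative vector
field associated to a left-invariant vector field `u` on `G₀`. -/
noncomputable def q1 (E : G0 →* G1) (u : G0 → G0) : G1 → G1 :=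
  fun γ => fderiv ℝ (fun μ => γ * μ) (1 : G1) (fderiv ℝ E (1 : G0) (u 1))

/-- `q1 E u` is `E`-related to `u` when `u` is left invariant. -/
theorem q1_related (E : G0 →* G1) (hE : ContDiff ℝ (⊤ : ℕ∞) E)
    (hm0 : ContDiff ℝ (⊤ : ℕ∞) fun p : G0 × G0 => p.1 * p.2)
    (hm1 : ContDiff ℝ (⊤ : ℕ∞) fun p : G1 × G1 => p.1 * p.2)
    (u : G0 → G0) (hu : LeftInv u) (x : G0) :
    q1 E u (E x) = fderiv ℝ E x (u x) := by
  have hux : u x = fderiv ℝ (fun z => x * z) 1 (u 1) := by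
    have := hu x 1; rwa [mul_one] at this
  have c1 : fderiv ℝ (⇑E ∘ fun z => x * z) 1
      = (fderiv ℝ E x).comp (fderiv ℝ (fun z => x * z) 1) := by
    have := fderiv_comp (1 : G0) (g := ⇑E) (f := fun z => x * z)
      ((hE.differentiable (by simp)) _)
      (((smooth_lmul hm0 x).differentiable (by simp)) 1)
    simpa [mul_one] using this
  have hcomm : (⇑E ∘ fun z => x * z) = (fun w => E x * w) ∘ ⇑E := by
    funext z; simp [map_mul]
  have c2 : fderiv ℝ ((fun w => E x * w) ∘ ⇑E) 1
      = (fderiv ℝ (fun w => E x * w) 1).comp (fderiv ℝ E 1) := by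
    have := fderiv_comp (1 : G0) (g := fun w => E x * w) (f := ⇑E)
      (((smooth_lmul hm1 (E x)).differentiable (by simp)) _)
      ((hE.differentiable (by simp)) 1)
    simpa [map_one] using this
  calc q1 E u (E x) = (fderiv ℝ (fun w => E x * w) 1).comp (fderiv ℝ E 1) (u 1) := rfl
    _ = fderiv ℝ (⇑E ∘ fun z => x * z) 1 (u 1) := by rw [hcomm, c2]
    _ = fderiv ℝ E x (u x) := by rw [c1, hux]; rfl

/-- `q : ℒ(G)₀ → 𝕏(G)₀`, `u ↦ (u, q₁ u)`, is an injective Lie algebra homomorphism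
(for the componentwise bracket on multiplicative vector fields). -/
theorem q_injective_lie_hom (E : G0 →* G1)
    (hE : ContDiff ℝ (⊤ : ℕ∞) E)
    (hm0 : ContDiff ℝ (⊤ : ℕ∞) fun p : G0 × G0 => p.1 * p.2)
    (hm1 : ContDiff ℝ (⊤ : ℕ∞) fun p : G1 × G1 => p.1 * p.2) :
    Function.Injective (fun u : G0 → G0 => ((u, q1 E u) : (G0 → G0) × (G1 → G1))) ∧
    ∀ u v : G0 → G0, LeftInv u → LeftInv v → ContDiff ℝ (⊤ : ℕ∞) u → ContDiff ℝ (⊤ : ℕ∞) v →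
      q1 E (lieB u v) = lieB (q1 E u) (q1 E v) := by
  constructor
  · intro a b h
    simpa using congrArg Prod.fst h
  · intro u v hu hv hus hvs
    set X : G1 → G1 := q1 E u with hXdef
    set Y : G1 → G1 := q1 E v with hYdef
    have hXa : X = fun γ => fderiv ℝ (fun μ => γ * μ) 1 (fderiv ℝ E 1 (u 1)) := rfl
    have hYa : Y = fun γ => fderiv ℝ (fun μ => γ * μ) 1 (fderiv ℝ E 1 (v 1)) := rfl
    have hXs : ContDiff ℝ (⊤ : ℕ∞) X := by rw [hXa]; exact smooth_Xa hm1 _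
    have hYs : ContDiff ℝ (⊤ : ℕ∞) Y := by rw [hYa]; exact smooth_Xa hm1 _
    have hXi : LeftInv X := by rw [hXa]; exact leftInv_Xa hm1 _
    have hYi : LeftInv Y := by rw [hYa]; exact leftInv_Xa hm1 _
    -- the bracket at the identity
    have hone : lieB X Y (1 : G1) = fderiv ℝ E 1 (lieB u v 1) := by
      have := related_lieB (⇑E) hE u v X Y 1
        ((hus.differentiable (by simp)) 1) ((hvs.differentiable (by simp)) 1)
        (by rw [map_one]; exact (hXs.differentiable (by simp)) 1)
        (by rw [map_one]; exact (hYs.differentiable (by simp)) 1)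
        (q1_related E hE hm0 hm1 u hu) (q1_related E hE hm0 hm1 v hv)
      rwa [map_one] at this
    funext γ
    -- left-translate to γ
    have hγ : lieB X Y γ = fderiv ℝ (fun μ => γ * μ) 1 (lieB X Y 1) := by
      have := related_lieB (fun μ => γ * μ) (smooth_lmul hm1 γ) X Y X Y 1
        ((hXs.differentiable (by simp)) 1) ((hYs.differentiable (by simp)) 1)
        (by simpa using (hXs.differentiable (by simp)) γ)
        (by simpa using (hYs.differentiable (by simp)) γ)
        (fun z => hXi γ z) (fun z => hYi γ z)
      simpa using this
    rw [hγ, hone]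
    rfl
end

section
/- Let G be a Lie 2-group. The map J: 𝕏(G)₁ → 𝒳(G₁), sending an arrow α of the category of multiplicative vector fields to the vector field J(α) = j(α − 𝟙_{s(α)}) + s(α)₁ (where j embeds sections of the Lie algebroid of G as right-invariant vector fields), satisfies J(q(α)) = α for every left-invariant vector field α on the Lie group G₁ that defines an arrow of ℒ(G); consequently q: ℒ(G)₁ → 𝕏(G)₁ is a Lie algebra homomorphism for the bracket on 𝕏(G)₁ induced by J. -/
variable {G0 G1 : Type*}
  [NormedAddCommGroup G0] [NormedSpace ℝ G0] [Group G0]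
  [NormedAddCommGroup G1] [NormedSpace ℝ G1] [Group G1]

/-- `J(q(α))` for a left-invariant vector field `α` on `G₁` which is `s`-related to
the left-invariant vector field `u` on `G₀`:
`J(q(α))(γ) = j(q(α) − 𝟙_{q(u)})(γ) + q(u)₁(γ)`, where
`j(ζ)(γ) = T𝓛_{γ·(1_{t(γ)})⁻¹}(ζ(t(γ)))`, `(q(α) − 𝟙_{q(u)})(y) = α(1_y) − T1(u(y))`
and `q(u)₁(γ) = T𝓛_γ(T1(u(e₀)))`. -/
noncomputable def Jq (E : G0 →* G1) (Tt : G1 →* G0)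
    (α : G1 → G1) (u : G0 → G0) : G1 → G1 :=
  fun γ =>
    fderiv ℝ (fun μ => (γ * (E (Tt γ))⁻¹) * μ) (E (Tt γ))
        (α (E (Tt γ)) - fderiv ℝ E (Tt γ) (u (Tt γ)))
      + fderiv ℝ (fun μ => γ * μ) (1 : G1) (fderiv ℝ E (1 : G0) (u 1))


section Aux

variable {V : Type*} [NormedAddCommGroup V] [NormedSpace ℝ V] [Group V]

/-- Left translation is smooth when multiplication is smooth. -/
lemma contDiff_Lmul (hm : ContDiff ℝ (⊤ : ℕ∞) fun p : V × V => p.1 * p.2) (x : V) :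
    ContDiff ℝ (⊤ : ℕ∞) (fun z : V => x * z) :=
  hm.comp (contDiff_const.prodMk contDiff_id)

/-- The chain rule for composed left translations. -/
lemma fderiv_Lmul_comp (hm : ContDiff ℝ (⊤ : ℕ∞) fun p : V × V => p.1 * p.2)
    (x a : V) (y : V) (w : V) :
    fderiv ℝ (fun z : V => x * z) (a * y) (fderiv ℝ (fun z : V => a * z) y w)
      = fderiv ℝ (fun z : V => (x * a) * z) y w := by
  have h1 : (fun z : V => (x * a) * z) = (fun z : V => x * z) ∘ (fun z : V => a * z) := by
    funext z; simp [mul_assoc]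
  rw [h1, fderiv_comp (x := y) (((contDiff_Lmul hm x).differentiable (by simp)).differentiableAt)
      (((contDiff_Lmul hm a).differentiable (by simp)).differentiableAt)]
  rfl

/-- The Lie bracket of left-invariant vector fields is left-invariant. -/
lemma leftInv_lieB (hm : ContDiff ℝ (⊤ : ℕ∞) fun p : V × V => p.1 * p.2)
    {α β : V → V} (hα : LeftInv α) (hβ : LeftInv β)
    (hαc : ContDiff ℝ (⊤ : ℕ∞) α) (hβc : ContDiff ℝ (⊤ : ℕ∞) β) : LeftInv (lieB α β) := by
  intro x y
  set L : V → V := fun z => x * z with hLdef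
  have hL : ContDiff ℝ (⊤ : ℕ∞) L := contDiff_Lmul hm x
  have hLd : Differentiable ℝ L := hL.differentiable (by simp)
  have hL' : ContDiff ℝ (⊤ : ℕ∞) (fderiv ℝ L) := hL.fderiv_right (by simp)
  have hL'd : Differentiable ℝ (fderiv ℝ L) := hL'.differentiable (by simp)
  -- derivative of a composed left-invariant field, for any f invariant
  have key : ∀ (f : V → V), LeftInv f → ContDiff ℝ (⊤ : ℕ∞) f → ∀ w : V,
      fderiv ℝ f (L y) (fderiv ℝ L y w)
        = fderiv ℝ (fderiv ℝ L) y w (f y) + fderiv ℝ L y (fderiv ℝ f y w) := by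
    intro f hf hfc w
    have hcomp : f ∘ L = fun z => fderiv ℝ L z (f z) := by
      funext z; exact hf x z
    have h1 : fderiv ℝ (f ∘ L) y = (fderiv ℝ f (L y)).comp (fderiv ℝ L y) :=
      fderiv_comp (x := y) ((hfc.differentiable (by simp)).differentiableAt) (hLd.differentiableAt)
    have h2 : fderiv ℝ (fun z => fderiv ℝ L z (f z)) y
        = (fderiv ℝ L y).comp (fderiv ℝ f y) + (fderiv ℝ (fderiv ℝ L) y).flip (f y) :=
      fderiv_clm_apply (hL'd.differentiableAt) ((hfc.differentiable (by simp)).differentiableAt)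
    have h3 : (fderiv ℝ f (L y)).comp (fderiv ℝ L y)
        = (fderiv ℝ L y).comp (fderiv ℝ f y) + (fderiv ℝ (fderiv ℝ L) y).flip (f y) := by
      rw [← h1, hcomp, h2]
    have := congrArg (fun (T : V →L[ℝ] V) => T w) h3
    simpa using this.trans (by abel_nf; simp [add_comm])
  have hsymm : IsSymmSndFDerivAt ℝ L y :=
    hL.contDiffAt.isSymmSndFDerivAt (by rw [minSmoothness_of_isRCLikeNormedField]; exact WithTop.coe_le_coe.mpr (le_top : (2 : ℕ∞) ≤ ⊤))
  have hβk := key β hβ hβc (α y)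
  have hαk := key α hα hαc (β y)
  have hαL : α (L y) = fderiv ℝ L y (α y) := hα x y
  have hβL : β (L y) = fderiv ℝ L y (β y) := hβ x y
  calc lieB α β (L y)
      = fderiv ℝ β (L y) (fderiv ℝ L y (α y)) - fderiv ℝ α (L y) (fderiv ℝ L y (β y)) := by
        rw [lieB, ← hαL, ← hβL]
    _ = (fderiv ℝ (fderiv ℝ L) y (α y) (β y) + fderiv ℝ L y (fderiv ℝ β y (α y)))
        - (fderiv ℝ (fderiv ℝ L) y (β y) (α y) + fderiv ℝ L y (fderiv ℝ α y (β y))) := by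
        rw [hβk, hαk]
    _ = fderiv ℝ L y (fderiv ℝ β y (α y) - fderiv ℝ α y (β y)) := by
        rw [hsymm (α y) (β y)]; rw [map_sub]; abel
    _ = fderiv ℝ L y (lieB α β y) := rfl

end Aux

section Main

variable {G0 G1 : Type*}
  [NormedAddCommGroup G0] [NormedSpace ℝ G0] [Group G0]
  [NormedAddCommGroup G1] [NormedSpace ℝ G1] [Group G1]

/-- The first part of the statement, isolated: `J(q(α)) = α` for left-invariant `α, u`. -/
lemma Jq_eq (E : G0 →* G1) (Tt : G1 →* G0)
    (hE : ContDiff ℝ (⊤ : ℕ∞) E)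
    (hm1 : ContDiff ℝ (⊤ : ℕ∞) fun p : G1 × G1 => p.1 * p.2)
    (hm0 : ContDiff ℝ (⊤ : ℕ∞) fun p : G0 × G0 => p.1 * p.2)
    {α : G1 → G1} {u : G0 → G0} (hα : LeftInv α) (hu : LeftInv u) (γ : G1) :
    Jq E Tt α u γ = α γ := by
  set a : G1 := E (Tt γ) with ha
  set x : G1 := γ * a⁻¹ with hx
  have hxa : x * a = γ := by rw [hx, inv_mul_cancel_right]
  -- value of α at γ via left invariance
  have h1 : α γ = fderiv ℝ (fun z : G1 => x * z) a (α a) := by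
    rw [← hxa]; exact hα x a
  -- u (Tt γ) via left invariance at 1
  have h2 : u (Tt γ) = fderiv ℝ (fun z : G0 => Tt γ * z) 1 (u 1) := by
    conv_lhs => rw [← mul_one (Tt γ)]
    exact hu (Tt γ) 1
  -- E ∘ (left mult by Tt γ) = (left mult by a) ∘ E
  have h3 : fderiv ℝ E (Tt γ) (fderiv ℝ (fun z : G0 => Tt γ * z) 1 (u 1))
      = fderiv ℝ (fun z : G1 => a * z) 1 (fderiv ℝ E 1 (u 1)) := by
    have hc1 : (⇑E) ∘ (fun z : G0 => Tt γ * z) = (fun z : G1 => a * z) ∘ ⇑E := by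
      funext z; simp [ha, map_mul]
    have e1 : fderiv ℝ ((⇑E) ∘ (fun z : G0 => Tt γ * z)) 1
        = (fderiv ℝ E (Tt γ * 1)).comp (fderiv ℝ (fun z : G0 => Tt γ * z) 1) :=
      fderiv_comp (x := 1) ((hE.differentiable (by simp)).differentiableAt)
        (((contDiff_Lmul hm0 (Tt γ)).differentiable (by simp)).differentiableAt)
    have e2 : fderiv ℝ ((fun z : G1 => a * z) ∘ ⇑E) 1
        = (fderiv ℝ (fun z : G1 => a * z) (E 1)).comp (fderiv ℝ E 1) :=
      fderiv_comp (x := 1) (((contDiff_Lmul hm1 a).differentiable (by simp)).differentiableAt)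
        ((hE.differentiable (by simp)).differentiableAt)
    have := congrArg (fun T : G0 →L[ℝ] G1 => T (u 1)) ((e1.symm.trans (by rw [hc1])).trans e2)
    simpa [map_one] using this
  -- composing left translations in G1
  have h4 : fderiv ℝ (fun z : G1 => x * z) a (fderiv ℝ (fun z : G1 => a * z) 1 (fderiv ℝ E 1 (u 1)))
      = fderiv ℝ (fun z : G1 => γ * z) 1 (fderiv ℝ E 1 (u 1)) := by
    have := fderiv_Lmul_comp hm1 x a 1 (fderiv ℝ E 1 (u 1))
    rw [mul_one] at this
    rw [this, hxa]
  have hchain : fderiv ℝ (fun z : G1 => x * z) a (fderiv ℝ E (Tt γ) (u (Tt γ)))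
      = fderiv ℝ (fun z : G1 => γ * z) 1 (fderiv ℝ E 1 (u 1)) := by
    rw [h2, h3, h4]
  show fderiv ℝ (fun μ => x * μ) a (α a - fderiv ℝ E (Tt γ) (u (Tt γ)))
      + fderiv ℝ (fun μ => γ * μ) 1 (fderiv ℝ E 1 (u 1)) = α γ
  rw [map_sub, hchain, h1]
  abel

end Main

theorem J_q_eq_id_and_q_bracket (S Tt : G1 →* G0) (E : G0 →* G1)
    (hSE : ∀ x, S (E x) = x) (hTE : ∀ x, Tt (E x) = x)
    (hE : ContDiff ℝ (⊤ : ℕ∞) E) (hS : ContDiff ℝ (⊤ : ℕ∞) S) (hT : ContDiff ℝ (⊤ : ℕ∞) Tt)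
    (hm1 : ContDiff ℝ (⊤ : ℕ∞) fun p : G1 × G1 => p.1 * p.2)
    (hm0 : ContDiff ℝ (⊤ : ℕ∞) fun p : G0 × G0 => p.1 * p.2)
    (α β : G1 → G1) (u v : G0 → G0)
    (hα : LeftInv α) (hβ : LeftInv β) (hu : LeftInv u) (hv : LeftInv v)
    (hαs : ∀ γ, fderiv ℝ S γ (α γ) = u (S γ))   -- `α` is `s`-related to `u`
    (hβs : ∀ γ, fderiv ℝ S γ (β γ) = v (S γ))   -- `β` is `s`-related to `v`
    (hαc : ContDiff ℝ (⊤ : ℕ∞) α) (hβc : ContDiff ℝ (⊤ : ℕ∞) β)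
    (huc : ContDiff ℝ (⊤ : ℕ∞) u) (hvc : ContDiff ℝ (⊤ : ℕ∞) v) :
    -- `J(q(α)) = α`:
    (∀ γ, Jq E Tt α u γ = α γ) ∧
    -- consequently `q` preserves the bracket induced by `J`:
    Jq E Tt (lieB α β) (lieB u v) = lieB (Jq E Tt α u) (Jq E Tt β v) := by
  have part1 : ∀ (α : G1 → G1) (u : G0 → G0), LeftInv α → LeftInv u →
      ∀ γ, Jq E Tt α u γ = α γ := fun α u hα hu γ => Jq_eq E Tt hE hm1 hm0 hα hu γ
  refine ⟨part1 α u hα hu, ?_⟩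
  have hb1 : LeftInv (lieB α β) := leftInv_lieB hm1 hα hβ hαc hβc
  have hb0 : LeftInv (lieB u v) := leftInv_lieB hm0 hu hv huc hvc
  funext γ
  have e1 : Jq E Tt α u = α := funext (part1 α u hα hu)
  have e2 : Jq E Tt β v = β := funext (part1 β v hβ hv)
  rw [part1 _ _ hb1 hb0 γ, e1, e2]
end
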